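/- arXiv:1911.00096 — 5 statements merged into one kernel-verified Lean document; each statement's English description precedes it below -/
import Mathlib

section
/- Let N be a squarefree positive integer and let c, d be divisors of N. Setting e := gcd(c,d) · gcd(N/c, N/d), one has N · gcd(d, e)² = c · d · e. Equivalently, c = N · gcd(d,e)² / (d·e). -/
/-!
Compare `p`-adic valuations prime by prime. As `N` is squarefree, `v_p(N) = n ≤ 1`, and the
valuations `a = v_p(c)`, `b = v_p(d)` lie in `{0, …, n}`; with `v_p(e) = min a b + min (n - a) (n - b)`
the identity becomes `n + 2 min b (v_p e) = a + b + v_p e`, which is checked on these few cases.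
-/

lemma factorization_gcd_mul_gcd_div_apply {N c d : ℕ} (hN : N ≠ 0) (hc : c ∣ N) (hd : d ∣ N)
    (p : ℕ) :
    (Nat.gcd c d * Nat.gcd (N / c) (N / d)).factorization p =
      min (c.factorization p) (d.factorization p) +
        min (N.factorization p - c.factorization p) (N.factorization p - d.factorization p) := by
  have hc0 := ne_zero_of_dvd_ne_zero hN hc
  have hd0 := ne_zero_of_dvd_ne_zero hN hd
  have hNc0 := ne_zero_of_dvd_ne_zero hN (Nat.div_dvd_of_dvd hc)
  have hNd0 := ne_zero_of_dvd_ne_zero hN (Nat.div_dvd_of_dvd hd)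
  rw [Nat.factorization_mul (Nat.gcd_ne_zero_left hc0) (Nat.gcd_ne_zero_left hNc0),
    Nat.factorization_gcd hc0 hd0, Nat.factorization_gcd hNc0 hNd0,
    Nat.factorization_div hc, Nat.factorization_div hd]
  simp only [Finsupp.add_apply, Finsupp.inf_apply, Finsupp.tsub_apply]

theorem sudoku_identity (N c d : ℕ) (hN : Squarefree N)
    (hc : c ∣ N) (hd : d ∣ N) :
    N * Nat.gcd d (Nat.gcd c d * Nat.gcd (N / c) (N / d)) ^ 2 =
      c * d * (Nat.gcd c d * Nat.gcd (N / c) (N / d)) := by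
  have hN0 : N ≠ 0 := hN.ne_zero
  have hc0 := ne_zero_of_dvd_ne_zero hN0 hc
  have hd0 := ne_zero_of_dvd_ne_zero hN0 hd
  have he_fact := factorization_gcd_mul_gcd_div_apply hN0 hc hd
  set e := Nat.gcd c d * Nat.gcd (N / c) (N / d)
  have he0 : e ≠ 0 := mul_ne_zero (Nat.gcd_ne_zero_left hc0)
    (Nat.gcd_ne_zero_left (ne_zero_of_dvd_ne_zero hN0 (Nat.div_dvd_of_dvd hc)))
  have hde0 : d.gcd e ≠ 0 := Nat.gcd_ne_zero_left hd0
  refine Nat.eq_of_factorization_eq (by positivity) (by positivity) fun p => ?_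
  have hcN := (Nat.factorization_le_iff_dvd hc0 hN0).2 hc p
  have hdN := (Nat.factorization_le_iff_dvd hd0 hN0).2 hd p
  have hN1 := hN.natFactorization_le_one p
  rw [Nat.factorization_mul hN0 (pow_ne_zero 2 hde0), Nat.factorization_pow,
    Nat.factorization_gcd hd0 he0, Nat.factorization_mul (mul_ne_zero hc0 hd0) he0,
    Nat.factorization_mul hc0 hd0]
  simp only [Finsupp.add_apply, Finsupp.smul_apply, Finsupp.inf_apply, smul_eq_mul, he_fact]
  omega
end

section
/- Let N be a squarefree positive integer and fix a divisor d of N. Then the map sending a divisor c of N to gcd(c,d) · gcd(N/c, N/d) is a bijection (in fact an involution) from the set of divisors of N to itself. -/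
private theorem sf_eq {x y : ℕ} (hx : Squarefree x) (hy : Squarefree y)
    (h : ∀ p : ℕ, p.Prime → (p ∣ x ↔ p ∣ y)) : x = y := by
  rw [← Nat.prod_primeFactors_of_squarefree hx, ← Nat.prod_primeFactors_of_squarefree hy]
  congr 1
  ext p
  simp only [Nat.mem_primeFactors]
  constructor
  · rintro ⟨hp, hpx, -⟩
    exact ⟨hp, (h p hp).mp hpx, hy.ne_zero⟩
  · rintro ⟨hp, hpy, -⟩
    exact ⟨hp, (h p hp).mpr hpy, hx.ne_zero⟩

private theorem dvd_div_iff_aux {N c p : ℕ} (hN : Squarefree N) (hc : c ∣ N)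
    (hp : p.Prime) : p ∣ N / c ↔ p ∣ N ∧ ¬ p ∣ c := by
  obtain ⟨e, he⟩ := hc
  have hc0 : c ≠ 0 := by rintro rfl; simp_all [hN.ne_zero]
  have hdiv : N / c = e := by rw [he, Nat.mul_div_cancel_left _ (Nat.pos_of_ne_zero hc0)]
  have hcop : Nat.Coprime c e := (Nat.squarefree_mul_iff.mp (he ▸ hN)).1
  rw [hdiv]
  constructor
  · intro hpe
    refine ⟨he ▸ hpe.mul_left c, fun hpc => hp.one_lt.ne' ?_⟩
    exact Nat.eq_one_of_dvd_coprimes hcop hpc hpe ▸ rfl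
  · rintro ⟨hpN, hpc⟩
    rcases (hp.dvd_mul.mp (he ▸ hpN)) with h | h
    · exact absurd h hpc
    · exact h

private theorem mem_f {N c d p : ℕ} (hN : Squarefree N) (hc : c ∣ N) (hd : d ∣ N)
    (hp : p.Prime) :
    p ∣ Nat.gcd c d * Nat.gcd (N / c) (N / d) ↔ p ∣ N ∧ ((p ∣ c) ↔ (p ∣ d)) := by
  rw [hp.dvd_mul, Nat.dvd_gcd_iff, Nat.dvd_gcd_iff,
    dvd_div_iff_aux hN hc hp, dvd_div_iff_aux hN hd hp]
  constructor
  · rintro (⟨h1, h2⟩ | ⟨⟨h1, h2⟩, h3, h4⟩)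
    · exact ⟨h1.trans hc, by tauto⟩
    · exact ⟨h1, by tauto⟩
  · rintro ⟨hpN, hiff⟩
    by_cases hpc : p ∣ c
    · exact Or.inl ⟨hpc, hiff.mp hpc⟩
    · exact Or.inr ⟨⟨hpN, hpc⟩, hpN, fun h => hpc (hiff.mpr h)⟩

private theorem f_dvd {N c d : ℕ} (hc : c ∣ N) (_hN : N ≠ 0) :
    Nat.gcd c d * Nat.gcd (N / c) (N / d) ∣ N := by
  have h1 : Nat.gcd c d ∣ c := Nat.gcd_dvd_left _ _
  have h2 : Nat.gcd (N / c) (N / d) ∣ N / c := Nat.gcd_dvd_left _ _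
  have := mul_dvd_mul h1 h2
  rwa [Nat.mul_div_cancel' hc] at this

theorem involute_bijOn_divisors (N d : ℕ) (hN : Squarefree N) (hd : d ∣ N) :
    Set.BijOn (fun c => Nat.gcd c d * Nat.gcd (N / c) (N / d))
      ↑N.divisors ↑N.divisors ∧
    ∀ c ∈ N.divisors,
      (fun c => Nat.gcd c d * Nat.gcd (N / c) (N / d))
        ((fun c => Nat.gcd c d * Nat.gcd (N / c) (N / d)) c) = c := by
  have hN0 : N ≠ 0 := hN.ne_zero
  set f : ℕ → ℕ := fun c => Nat.gcd c d * Nat.gcd (N / c) (N / d) with hf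
  have hmaps : ∀ c ∈ (N.divisors : Set ℕ), f c ∈ (N.divisors : Set ℕ) := by
    intro c hc
    simp only [Finset.coe_sort_coe, Finset.mem_coe, Nat.mem_divisors] at hc ⊢
    exact ⟨f_dvd hc.1 hN0, hN0⟩
  have hinv : ∀ c ∈ N.divisors, f (f c) = c := by
    intro c hcmem
    have hc : c ∣ N := (Nat.mem_divisors.mp hcmem).1
    have hfc : f c ∣ N := f_dvd hc hN0
    apply sf_eq (hN.squarefree_of_dvd (f_dvd hfc hN0)) (hN.squarefree_of_dvd hc)
    intro p hp
    rw [mem_f hN hfc hd hp, mem_f hN hc hd hp]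
    have h1 : p ∣ c → p ∣ N := fun h => h.trans hc
    have h2 : p ∣ d → p ∣ N := fun h => h.trans hd
    tauto
  refine ⟨?_, hinv⟩
  have hinv' : Set.InvOn f f (N.divisors : Set ℕ) (N.divisors : Set ℕ) :=
    ⟨fun c hc => hinv c (by simpa using hc), fun c hc => hinv c (by simpa using hc)⟩
  exact hinv'.bijOn hmaps hmaps
end

section
/- Let N be a squarefree positive integer and fix a divisor d of N. Then for every divisor c of N, the value N · gcd(d, e)² / (d · e), where e ranges over divisors of N, equals c for exactly one divisor e of N. -/
lemma sudoku_key (N d e : ℕ) (hN : Squarefree N) (hd : d ∣ N) (he : e ∣ N) :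
    N * Nat.gcd d e ^ 2 / (d * e) ∣ N ∧
    N * Nat.gcd d (N * Nat.gcd d e ^ 2 / (d * e)) ^ 2 /
      (d * (N * Nat.gcd d e ^ 2 / (d * e))) = e := by
  have hN0 : 0 < N := Nat.pos_of_ne_zero (by rintro rfl; exact not_squarefree_zero hN)
  have hd0 : 0 < d := Nat.pos_of_dvd_of_pos hd hN0
  have he0 : 0 < e := Nat.pos_of_dvd_of_pos he hN0
  set g := Nat.gcd d e with hg
  have hg0 : 0 < g := Nat.gcd_pos_of_pos_left e hd0
  set d' := d / g with hd'
  set e' := e / g with he'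
  have hdd : d = g * d' := (Nat.mul_div_cancel' (Nat.gcd_dvd_left d e)).symm
  have hee : e = g * e' := (Nat.mul_div_cancel' (Nat.gcd_dvd_right d e)).symm
  set L := Nat.lcm d e with hLdef
  have hLN : L ∣ N := Nat.lcm_dvd hd he
  set m := N / L with hm'
  have hm : N = L * m := (Nat.mul_div_cancel' hLN).symm
  have hgL : g * L = d * e := Nat.gcd_mul_lcm d e
  have hL : L = g * d' * e' := by
    have : g * L = g * (g * d' * e') := by rw [hgL, hdd, hee]; ring
    exact Nat.eq_of_mul_eq_mul_left hg0 this
  have hm0 : 0 < m := by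
    rcases Nat.eq_zero_or_pos m with h | h
    · rw [hm, h, mul_zero] at hN0; exact absurd rfl hN0.ne
    · exact h
  -- value of f(e)
  have hfe : N * g ^ 2 / (d * e) = g * m := by
    have h1 : N * g ^ 2 = (d * e) * (g * m) := by
      rw [hm, ← hgL]; ring
    rw [h1, Nat.mul_div_cancel_left _ (Nat.mul_pos hd0 he0)]
  constructor
  · rw [hfe]
    calc g * m ∣ L * m := mul_dvd_mul_right (dvd_trans (Nat.gcd_dvd_left d e) (Nat.dvd_lcm_left d e)) m
    _ = N := hm.symm
  · rw [hfe]
    -- gcd d (g*m) = g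
    have hcopLm : Nat.Coprime L m := by
      have := hm ▸ hN
      exact (Nat.squarefree_mul_iff.mp this).1
    have hd'L : d' ∣ L := dvd_trans ⟨g, by rw [hdd]; ring⟩ (Nat.dvd_lcm_left d e)
    have hcd'm : Nat.Coprime d' m := Nat.Coprime.coprime_dvd_left hd'L hcopLm
    have hgcd : Nat.gcd d (g * m) = g := by
      rw [hdd, Nat.gcd_mul_left, hcd'm.gcd_eq_one, mul_one]
    rw [hgcd]
    have h2 : N * g ^ 2 = (d * (g * m)) * e := by
      rw [hm, hL, hdd, hee]; ring
    rw [h2, Nat.mul_div_cancel_left _ (Nat.mul_pos hd0 (Nat.mul_pos hg0 hm0))]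

theorem sudoku_existsUnique (N d : ℕ) (hN : Squarefree N) (hd : d ∣ N) :
    ∀ c, c ∣ N → ∃! e : ℕ, e ∣ N ∧ N * Nat.gcd d e ^ 2 / (d * e) = c := by
  intro c hc
  obtain ⟨hc1, hc2⟩ := sudoku_key N d c hN hd hc
  refine ⟨N * Nat.gcd d c ^ 2 / (d * c), ⟨hc1, hc2⟩, ?_⟩
  rintro e ⟨heN, hfe⟩
  have := (sudoku_key N d e hN hd heN).2
  rw [hfe] at this
  exact this.symm
end

section
/- Let N = p₁p₂⋯p_ℓ be a squarefree integer coprime to 6 with ℓ ≥ 2 prime factors, and set 2h_N = gcd{p₁−1, p₂−1, …, p_ℓ−1, 24}. Then there exist distinct primes p, q dividing N such that gcd(p−1, q−1, 24) = gcd{p₁−1,…,p_ℓ−1, 24}. -/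
private lemma aux8 {m n : ℕ} (hm : m ∣ 8) (hn : n ∣ 8) (h : m ≤ n) : m ∣ n := by
  have h1 : m ≤ 8 := Nat.le_of_dvd (by norm_num) hm
  have h2 : n ≤ 8 := Nat.le_of_dvd (by norm_num) hn
  interval_cases m <;> interval_cases n <;> revert hm hn <;> decide

private lemma aux3 {m n : ℕ} (hm : m ∣ 3) (hn : n ∣ 3) (h : m ≤ n) : m ∣ n := by
  have h1 : m ≤ 3 := Nat.le_of_dvd (by norm_num) hm
  have h2 : n ≤ 3 := Nat.le_of_dvd (by norm_num) hn
  interval_cases m <;> interval_cases n <;> revert hm hn <;> decide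

private lemma key_dvd {d m : ℕ} (hd : d ∣ 24) (h8 : Nat.gcd d 8 ∣ m)
    (h3 : Nat.gcd d 3 ∣ m) : d ∣ m := by
  have hco : Nat.Coprime (Nat.gcd d 8) (Nat.gcd d 3) :=
    Nat.Coprime.coprime_dvd_left (Nat.gcd_dvd_right d 8)
      (Nat.Coprime.coprime_dvd_right (Nat.gcd_dvd_right d 3) (by norm_num))
  have hmul : Nat.gcd d 8 * Nat.gcd d 3 ∣ m := hco.mul_dvd_of_dvd_of_dvd h8 h3
  have hle : d ≤ 24 := Nat.le_of_dvd (by norm_num) hd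
  have hdd : d ∣ Nat.gcd d 8 * Nat.gcd d 3 := by
    interval_cases d <;> revert hd <;> decide
  exact hdd.trans hmul

theorem reduction_lemma_gcd (N : ℕ) (hN : Squarefree N)
    (hcop : Nat.Coprime N 6) (hℓ : 2 ≤ N.primeFactors.card) :
    ∃ p q : ℕ, p.Prime ∧ q.Prime ∧ p ≠ q ∧ p ∣ N ∧ q ∣ N ∧
      Nat.gcd (p - 1) (Nat.gcd (q - 1) 24) =
        Nat.gcd 24 (N.primeFactors.gcd fun r => r - 1) := by
  set s := N.primeFactors with hsdef
  have hs : s.Nonempty := Finset.card_pos.mp (by omega)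
  set g : ℕ → ℕ := fun r => Nat.gcd (r - 1) 24 with hg
  -- rewrite RHS as gcd over s of g
  have hGeq : Nat.gcd 24 (s.gcd fun r => r - 1) = s.gcd g := by
    apply Nat.dvd_antisymm
    · apply Finset.dvd_gcd
      intro r hr
      exact Nat.dvd_gcd ((Nat.gcd_dvd_right _ _).trans (Finset.gcd_dvd hr))
        (Nat.gcd_dvd_left _ _)
    · obtain ⟨r0, hr0⟩ := hs
      exact Nat.dvd_gcd ((Finset.gcd_dvd hr0).trans (Nat.gcd_dvd_right _ _))
        (Finset.dvd_gcd fun r hr => (Finset.gcd_dvd hr).trans (Nat.gcd_dvd_left _ _))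
  have hg24 : ∀ r, g r ∣ 24 := fun r => Nat.gcd_dvd_right _ _
  obtain ⟨p, hp, hpmin⟩ := s.exists_min_image (fun r => Nat.gcd (g r) 8) hs
  obtain ⟨q, hq, hqmin⟩ := s.exists_min_image (fun r => Nat.gcd (g r) 3) hs
  -- core: gcd (g p) (g q) = s.gcd g
  have hcore : ∀ a b : ℕ, a ∈ s → b ∈ s →
      (∀ r ∈ s, Nat.gcd (g a) 8 ≤ Nat.gcd (g r) 8) →
      (∀ r ∈ s, Nat.gcd (g b) 3 ≤ Nat.gcd (g r) 3) →
      Nat.gcd (g a) (g b) = s.gcd g := by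
    intro a b ha hb hamin hbmin
    apply Nat.dvd_antisymm
    · apply Finset.dvd_gcd
      intro r hr
      set d := Nat.gcd (g a) (g b) with hd
      have hd24 : d ∣ 24 := (Nat.gcd_dvd_left _ _).trans (hg24 a)
      apply key_dvd hd24
      · have h1 : Nat.gcd d 8 ∣ Nat.gcd (g a) 8 :=
          Nat.gcd_dvd_gcd_of_dvd_left 8 (Nat.gcd_dvd_left _ _)
        have h2 : Nat.gcd (g a) 8 ∣ Nat.gcd (g r) 8 :=
          aux8 (Nat.gcd_dvd_right _ _) (Nat.gcd_dvd_right _ _) (hamin r hr)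
        exact (h1.trans h2).trans (Nat.gcd_dvd_left _ _)
      · have h1 : Nat.gcd d 3 ∣ Nat.gcd (g b) 3 :=
          Nat.gcd_dvd_gcd_of_dvd_left 3 (Nat.gcd_dvd_right _ _)
        have h2 : Nat.gcd (g b) 3 ∣ Nat.gcd (g r) 3 :=
          aux3 (Nat.gcd_dvd_right _ _) (Nat.gcd_dvd_right _ _) (hbmin r hr)
        exact (h1.trans h2).trans (Nat.gcd_dvd_left _ _)
    · exact Nat.dvd_gcd (Finset.gcd_dvd ha) (Finset.gcd_dvd hb)
  have hgoal : ∀ a b : ℕ, a ∈ s → b ∈ s → a ≠ b →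
      Nat.gcd (g a) (g b) = s.gcd g →
      ∃ p q : ℕ, p.Prime ∧ q.Prime ∧ p ≠ q ∧ p ∣ N ∧ q ∣ N ∧
        Nat.gcd (p - 1) (Nat.gcd (q - 1) 24) =
          Nat.gcd 24 (N.primeFactors.gcd fun r => r - 1) := by
    intro a b ha hb hab heq
    refine ⟨a, b, Nat.prime_of_mem_primeFactors ha, Nat.prime_of_mem_primeFactors hb,
      hab, Nat.dvd_of_mem_primeFactors ha, Nat.dvd_of_mem_primeFactors hb, ?_⟩
    rw [hGeq, ← heq]
    -- gcd (a-1) (gcd (b-1) 24) = gcd (gcd (a-1) 24) (gcd (b-1) 24)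
    apply Nat.dvd_antisymm
    · exact Nat.dvd_gcd
        (Nat.dvd_gcd (Nat.gcd_dvd_left _ _)
          ((Nat.gcd_dvd_right _ _).trans (Nat.gcd_dvd_right _ _)))
        (Nat.gcd_dvd_right _ _)
    · exact Nat.dvd_gcd ((Nat.gcd_dvd_left _ _).trans (Nat.gcd_dvd_left _ _))
        (Nat.gcd_dvd_right _ _)
  by_cases hpq : p ≠ q
  · exact hgoal p q hp hq hpq (hcore p q hp hq hpmin hqmin)
  · push_neg at hpq
    subst hpq
    have hGp : g p = s.gcd g := by
      have := hcore p p hp hp hpmin hqmin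
      rwa [Nat.gcd_self] at this
    obtain ⟨q', hq', hq'p⟩ := Finset.exists_mem_ne (show 1 < s.card by omega) p
    refine hgoal p q' hp hq' (Ne.symm hq'p) ?_
    rw [hGp, Nat.gcd_eq_left]
    · exact Finset.gcd_dvd hq'
end

section
/- Let N = p₁p₂⋯p_ℓ be squarefree and coprime to 6 with ℓ ≥ 2. Define S to be the set of integers all of whose prime factors are > 5 and ≡ 1 or 5 (mod 24), with at least one prime factor ≡ 5 (mod 24). If N ∉ S, then there exist distinct primes p, q dividing N with gcd(p−1, q−1, 24) = gcd{p₁−1,…,p_ℓ−1, 24} and pq ∉ S. -/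
def memS (n : ℕ) : Prop :=
  (∀ p ∈ n.primeFactors, 5 < p ∧ (p % 24 = 1 ∨ p % 24 = 5)) ∧
    ∃ p ∈ n.primeFactors, p % 24 = 5

private lemma div8_cases {x : ℕ} (hx : x ∣ 8) : x = 1 ∨ x = 2 ∨ x = 4 ∨ x = 8 := by
  have h0 : 0 < x := Nat.pos_of_dvd_of_pos hx (by norm_num)
  have h8 := Nat.le_of_dvd (by norm_num) hx
  interval_cases x <;> first | decide | omega

private lemma div8_chain {x y : ℕ} (hx : x ∣ 8) (hy : y ∣ 8) (h : x ≤ y) : x ∣ y := by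
  rcases div8_cases hx with rfl|rfl|rfl|rfl <;> rcases div8_cases hy with rfl|rfl|rfl|rfl <;> omega

private lemma div24_split {x : ℕ} (hx : x ∣ 24) : Nat.gcd 8 x * Nat.gcd 3 x = x := by
  have h0 : 0 < x := Nat.pos_of_dvd_of_pos hx (by norm_num)
  have h24 := Nat.le_of_dvd (by norm_num) hx
  interval_cases x <;> first | decide | omega

private lemma gval {r : ℕ} (h2 : r % 2 = 1) (h3 : r % 3 ≠ 0) :
    (r % 24 = 1 ∧ Nat.gcd 24 (r - 1) = 24) ∨
    (r % 24 = 5 ∧ Nat.gcd 24 (r - 1) = 4) ∨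
    (r % 24 = 7 ∧ Nat.gcd 24 (r - 1) = 6) ∨
    (r % 24 = 11 ∧ Nat.gcd 24 (r - 1) = 2) ∨
    (r % 24 = 13 ∧ Nat.gcd 24 (r - 1) = 12) ∨
    (r % 24 = 17 ∧ Nat.gcd 24 (r - 1) = 8) ∨
    (r % 24 = 19 ∧ Nat.gcd 24 (r - 1) = 6) ∨
    (r % 24 = 23 ∧ Nat.gcd 24 (r - 1) = 2) := by
  rw [Nat.gcd_rec 24 (r - 1)]
  have h24 : r % 24 = 1 ∨ r % 24 = 5 ∨ r % 24 = 7 ∨ r % 24 = 11 ∨ r % 24 = 13 ∨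
      r % 24 = 17 ∨ r % 24 = 19 ∨ r % 24 = 23 := by omega
  rcases h24 with h|h|h|h|h|h|h|h <;>
    [skip; (right); (right;right); (right;right;right); (right;right;right;right);
     (right;right;right;right;right); (right;right;right;right;right;right);
     (right;right;right;right;right;right;right)] <;>
  · first
    | (left; refine ⟨h, ?_⟩; rw [show (r-1) % 24 = r % 24 - 1 by omega, h]; decide)
    | (refine ⟨h, ?_⟩; rw [show (r-1) % 24 = r % 24 - 1 by omega, h]; decide)

private lemma notS_bad_left {p q : ℕ} (hp : p.Prime) (hq : q.Prime)
    (h : ¬ (5 < p ∧ (p % 24 = 1 ∨ p % 24 = 5))) : ¬ memS (p * q) := by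
  intro hm
  exact h (hm.1 p (by
    rw [Nat.primeFactors_mul hp.pos.ne' hq.pos.ne', hp.primeFactors, hq.primeFactors]
    simp))

private lemma notS_bad_right {p q : ℕ} (hp : p.Prime) (hq : q.Prime)
    (h : ¬ (5 < q ∧ (q % 24 = 1 ∨ q % 24 = 5))) : ¬ memS (p * q) := by
  intro hm
  exact h (hm.1 q (by
    rw [Nat.primeFactors_mul hp.pos.ne' hq.pos.ne', hp.primeFactors, hq.primeFactors]
    simp))

private lemma notS_no5 {p q : ℕ} (hp : p.Prime) (hq : q.Prime)
    (h5p : p % 24 ≠ 5) (h5q : q % 24 ≠ 5) : ¬ memS (p * q) := by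
  intro hm
  obtain ⟨x, hx, hx5⟩ := hm.2
  rw [Nat.primeFactors_mul hp.pos.ne' hq.pos.ne', hp.primeFactors, hq.primeFactors] at hx
  simp at hx
  rcases hx with rfl | rfl <;> [exact h5p hx5; exact h5q hx5]

theorem reduction_lemma_moreover (N : ℕ) (hN : Squarefree N)
    (hcop : Nat.Coprime N 6) (hℓ : 2 ≤ N.primeFactors.card)
    (hNS : ¬ memS N) :
    ∃ p q : ℕ, p.Prime ∧ q.Prime ∧ p ≠ q ∧ p ∣ N ∧ q ∣ N ∧
      Nat.gcd (p - 1) (Nat.gcd (q - 1) 24) =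
        Nat.gcd 24 (N.primeFactors.gcd fun r => r - 1) ∧
      ¬ memS (p * q) := by
  classical
  have hbasic : ∀ r ∈ N.primeFactors, r.Prime ∧ r ∣ N ∧ r % 2 = 1 ∧ r % 3 ≠ 0 ∧ 5 ≤ r := by
    intro r hr
    have hp := Nat.prime_of_mem_primeFactors hr
    have hd := Nat.dvd_of_mem_primeFactors hr
    have hc : Nat.Coprime r 6 := Nat.Coprime.coprime_dvd_left hd hcop
    have h1 : Nat.gcd r 6 = 1 := hc
    have h2 : ¬ (2 ∣ r) := by
      intro h
      have := Nat.dvd_gcd h (by norm_num : (2:ℕ) ∣ 6)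
      rw [h1] at this; omega
    have h3 : ¬ (3 ∣ r) := by
      intro h
      have := Nat.dvd_gcd h (by norm_num : (3:ℕ) ∣ 6)
      rw [h1] at this; omega
    have h2' : r % 2 = 1 := by omega
    have h3' : r % 3 ≠ 0 := by omega
    exact ⟨hp, hd, h2', h3', by have := hp.two_le; omega⟩
  have hval : ∀ r ∈ N.primeFactors,
      (r % 24 = 1 ∧ Nat.gcd 24 (r - 1) = 24) ∨
      (r % 24 = 5 ∧ Nat.gcd 24 (r - 1) = 4) ∨
      (r % 24 = 7 ∧ Nat.gcd 24 (r - 1) = 6) ∨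
      (r % 24 = 11 ∧ Nat.gcd 24 (r - 1) = 2) ∨
      (r % 24 = 13 ∧ Nat.gcd 24 (r - 1) = 12) ∨
      (r % 24 = 17 ∧ Nat.gcd 24 (r - 1) = 8) ∨
      (r % 24 = 19 ∧ Nat.gcd 24 (r - 1) = 6) ∨
      (r % 24 = 23 ∧ Nat.gcd 24 (r - 1) = 2) :=
    fun r hr => gval (hbasic r hr).2.2.1 (hbasic r hr).2.2.2.1
  -- the finishing move
  have final : ∀ u v : ℕ, u ∈ N.primeFactors → v ∈ N.primeFactors → u ≠ v →
      (∀ r ∈ N.primeFactors,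
        Nat.gcd (Nat.gcd 24 (u - 1)) (Nat.gcd 24 (v - 1)) ∣ Nat.gcd 24 (r - 1)) →
      ¬ memS (u * v) →
      ∃ p q : ℕ, p.Prime ∧ q.Prime ∧ p ≠ q ∧ p ∣ N ∧ q ∣ N ∧
        Nat.gcd (p - 1) (Nat.gcd (q - 1) 24) =
          Nat.gcd 24 (N.primeFactors.gcd fun r => r - 1) ∧
        ¬ memS (p * q) := by
    intro u v hu hv huv hdvd hS
    refine ⟨u, v, Nat.prime_of_mem_primeFactors hu, Nat.prime_of_mem_primeFactors hv, huv,
      Nat.dvd_of_mem_primeFactors hu, Nat.dvd_of_mem_primeFactors hv, ?_, hS⟩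
    apply Nat.dvd_antisymm
    · apply Nat.dvd_gcd
      · exact (Nat.gcd_dvd_right _ _).trans (Nat.gcd_dvd_right _ _)
      · apply Finset.dvd_gcd
        intro r hr
        have hL24 : Nat.gcd (u - 1) (Nat.gcd (v - 1) 24) ∣ 24 :=
          (Nat.gcd_dvd_right _ _).trans (Nat.gcd_dvd_right _ _)
        have hLu : Nat.gcd (u - 1) (Nat.gcd (v - 1) 24) ∣ Nat.gcd 24 (u - 1) :=
          Nat.dvd_gcd hL24 (Nat.gcd_dvd_left _ _)
        have hLv : Nat.gcd (u - 1) (Nat.gcd (v - 1) 24) ∣ Nat.gcd 24 (v - 1) :=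
          Nat.dvd_gcd hL24 ((Nat.gcd_dvd_right _ _).trans (Nat.gcd_dvd_left _ _))
        exact ((Nat.dvd_gcd hLu hLv).trans (hdvd r hr)).trans (Nat.gcd_dvd_right 24 (r - 1))
    · refine Nat.dvd_gcd ?_ (Nat.dvd_gcd ?_ (Nat.gcd_dvd_left _ _))
      · exact (Nat.gcd_dvd_right _ _).trans (Finset.gcd_dvd hu)
      · exact (Nat.gcd_dvd_right _ _).trans (Finset.gcd_dvd hv)
  -- choose p minimizing gcd 8 (g r)
  have hne : N.primeFactors.Nonempty := Finset.card_pos.mp (by omega)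
  obtain ⟨p, hpP, hmin⟩ :=
    N.primeFactors.exists_min_image (fun r => Nat.gcd 8 (Nat.gcd 24 (r - 1))) hne
  have hpprime := Nat.prime_of_mem_primeFactors hpP
  have hchain : ∀ r ∈ N.primeFactors,
      Nat.gcd 8 (Nat.gcd 24 (p - 1)) ∣ Nat.gcd 24 (r - 1) := by
    intro r hr
    exact (div8_chain (Nat.gcd_dvd_left _ _) (Nat.gcd_dvd_left _ _) (hmin r hr)).trans
      (Nat.gcd_dvd_right 8 _)
  have hdvd_no3 : ∀ q : ℕ, ¬ (3 ∣ Nat.gcd (Nat.gcd 24 (p - 1)) (Nat.gcd 24 (q - 1))) →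
      ∀ r ∈ N.primeFactors,
        Nat.gcd (Nat.gcd 24 (p - 1)) (Nat.gcd 24 (q - 1)) ∣ Nat.gcd 24 (r - 1) := by
    intro q h3 r hr
    have hx24 : Nat.gcd (Nat.gcd 24 (p - 1)) (Nat.gcd 24 (q - 1)) ∣ 24 :=
      (Nat.gcd_dvd_left _ _).trans (Nat.gcd_dvd_left 24 (p - 1))
    have h3x : Nat.gcd 3 (Nat.gcd (Nat.gcd 24 (p - 1)) (Nat.gcd 24 (q - 1))) = 1 := by
      rcases (Nat.dvd_prime Nat.prime_three).mp (Nat.gcd_dvd_left 3 _) with h | h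
      · exact h
      · exact absurd (h ▸ Nat.gcd_dvd_right 3 _) h3
    have hsplit := div24_split hx24
    rw [h3x, mul_one] at hsplit
    have hx8 : Nat.gcd 8 (Nat.gcd (Nat.gcd 24 (p - 1)) (Nat.gcd 24 (q - 1))) ∣
        Nat.gcd 8 (Nat.gcd 24 (p - 1)) :=
      Nat.dvd_gcd (Nat.gcd_dvd_left _ _) ((Nat.gcd_dvd_right _ _).trans (Nat.gcd_dvd_left _ _))
    calc Nat.gcd (Nat.gcd 24 (p - 1)) (Nat.gcd 24 (q - 1))
        = Nat.gcd 8 (Nat.gcd (Nat.gcd 24 (p - 1)) (Nat.gcd 24 (q - 1))) := hsplit.symm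
      _ ∣ Nat.gcd 8 (Nat.gcd 24 (p - 1)) := hx8
      _ ∣ Nat.gcd 24 (r - 1) := hchain r hr
  by_cases h3all : ∀ r ∈ N.primeFactors, 3 ∣ Nat.gcd 24 (r - 1)
  · -- no prime ≡ 5 (mod 24); any pair works
    have hno5 : ∀ r ∈ N.primeFactors, r % 24 ≠ 5 := by
      intro r hr h5
      have h3 := h3all r hr
      rcases hval r hr with ⟨h,hg⟩|⟨h,hg⟩|⟨h,hg⟩|⟨h,hg⟩|⟨h,hg⟩|⟨h,hg⟩|⟨h,hg⟩|⟨h,hg⟩ <;>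
        rw [hg] at h3 <;> omega
    obtain ⟨q, hqP, hqp⟩ := Finset.exists_mem_ne (show 1 < N.primeFactors.card by omega) p
    have hdvd : ∀ r ∈ N.primeFactors,
        Nat.gcd (Nat.gcd 24 (p - 1)) (Nat.gcd 24 (q - 1)) ∣ Nat.gcd 24 (r - 1) := by
      intro r hr
      have hx24 : Nat.gcd (Nat.gcd 24 (p - 1)) (Nat.gcd 24 (q - 1)) ∣ 24 :=
        (Nat.gcd_dvd_left _ _).trans (Nat.gcd_dvd_left 24 (p - 1))
      have h8 : Nat.gcd 8 (Nat.gcd (Nat.gcd 24 (p - 1)) (Nat.gcd 24 (q - 1))) ∣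
          Nat.gcd 24 (r - 1) :=
        (Nat.dvd_gcd (Nat.gcd_dvd_left _ _)
          ((Nat.gcd_dvd_right _ _).trans (Nat.gcd_dvd_left _ _))).trans (hchain r hr)
      have h3 : Nat.gcd 3 (Nat.gcd (Nat.gcd 24 (p - 1)) (Nat.gcd 24 (q - 1))) ∣
          Nat.gcd 24 (r - 1) :=
        (Nat.gcd_dvd_left 3 _).trans (h3all r hr)
      have hco : Nat.Coprime (Nat.gcd 8 (Nat.gcd (Nat.gcd 24 (p - 1)) (Nat.gcd 24 (q - 1))))
          (Nat.gcd 3 (Nat.gcd (Nat.gcd 24 (p - 1)) (Nat.gcd 24 (q - 1)))) :=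
        Nat.Coprime.coprime_dvd_left (Nat.gcd_dvd_left 8 _)
          (Nat.Coprime.coprime_dvd_right (Nat.gcd_dvd_left 3 _)
            (by norm_num : Nat.Coprime 8 3))
      have := hco.mul_dvd_of_dvd_of_dvd h8 h3
      rwa [div24_split hx24] at this
    exact final p q hpP hqP (Ne.symm hqp) hdvd
      (notS_no5 hpprime (Nat.prime_of_mem_primeFactors hqP) (hno5 p hpP) (hno5 q hqP))
  · push_neg at h3all
    obtain ⟨s, hsP, hs3⟩ := h3all
    have hsprime := Nat.prime_of_mem_primeFactors hsP
    by_cases h3p : 3 ∣ Nat.gcd 24 (p - 1)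
    · -- pair (p, s)
      have hps : p ≠ s := by rintro rfl; exact hs3 h3p
      have hdvd := hdvd_no3 s (by
        intro h
        exact hs3 (h.trans (Nat.gcd_dvd_right _ _)))
      rcases hval p hpP with ⟨h,hg⟩|⟨h,hg⟩|⟨h,hg⟩|⟨h,hg⟩|⟨h,hg⟩|⟨h,hg⟩|⟨h,hg⟩|⟨h,hg⟩
      · -- p ≡ 1 : then min gcd8 is 8, so s has g = 8, s ≡ 17, s bad
        have hap : Nat.gcd 8 (Nat.gcd 24 (p - 1)) = 8 := by rw [hg]; decide
        have h8s := hmin s hsP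
        rw [hap] at h8s
        have hs8 : Nat.gcd 8 (Nat.gcd 24 (s - 1)) = 8 := by
          have := Nat.le_of_dvd (by norm_num) (Nat.gcd_dvd_left 8 (Nat.gcd 24 (s - 1)))
          omega
        have h8dvd : (8:ℕ) ∣ Nat.gcd 24 (s - 1) := hs8 ▸ Nat.gcd_dvd_right 8 _
        have hsbad : ¬ (5 < s ∧ (s % 24 = 1 ∨ s % 24 = 5)) := by
          rcases hval s hsP with ⟨h',hg'⟩|⟨h',hg'⟩|⟨h',hg'⟩|⟨h',hg'⟩|⟨h',hg'⟩|⟨h',hg'⟩|⟨h',hg'⟩|⟨h',hg'⟩ <;>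
            rw [hg'] at h8dvd hs3 <;> first | omega | (intro hc; omega)
        exact final p s hpP hsP hps hdvd (notS_bad_right hpprime hsprime hsbad)
      · rw [hg] at h3p; omega
      · exact final p s hpP hsP hps hdvd
          (notS_bad_left hpprime hsprime (by intro hc; omega))
      · rw [hg] at h3p; omega
      · exact final p s hpP hsP hps hdvd
          (notS_bad_left hpprime hsprime (by intro hc; omega))
      · rw [hg] at h3p; omega
      · exact final p s hpP hsP hps hdvd
          (notS_bad_left hpprime hsprime (by intro hc; omega))
      · rw [hg] at h3p; omega
    · -- 3 ∤ g p : any q works for the gcd; pick an admissible partner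
      have hdvdq : ∀ q : ℕ, ∀ r ∈ N.primeFactors,
          Nat.gcd (Nat.gcd 24 (p - 1)) (Nat.gcd 24 (q - 1)) ∣ Nat.gcd 24 (r - 1) := by
        intro q
        exact hdvd_no3 q (fun h => h3p (h.trans (Nat.gcd_dvd_left _ _)))
      rcases hval p hpP with ⟨h,hg⟩|⟨h,hg⟩|⟨h,hg⟩|⟨h,hg⟩|⟨h,hg⟩|⟨h,hg⟩|⟨h,hg⟩|⟨h,hg⟩
      · rw [hg] at h3p; omega
      · -- p ≡ 5 (mod 24): use a bad prime from ¬memS N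
        obtain ⟨b, hbP, hbbad⟩ : ∃ b ∈ N.primeFactors, ¬ (5 < b ∧ (b % 24 = 1 ∨ b % 24 = 5)) := by
          by_contra hc
          push_neg at hc
          exact hNS ⟨hc, p, hpP, h⟩
        by_cases hbp : b = p
        · subst hbp
          obtain ⟨q, hqP, hqp⟩ := Finset.exists_mem_ne (show 1 < N.primeFactors.card by omega) b
          exact final b q hbP hqP (Ne.symm hqp) (hdvdq q)
            (notS_bad_left hpprime (Nat.prime_of_mem_primeFactors hqP) hbbad)
        · exact final p b hpP hbP (fun hh => hbp hh.symm) (hdvdq b)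
            (notS_bad_right hpprime (Nat.prime_of_mem_primeFactors hbP) hbbad)
      · rw [hg] at h3p; omega
      · obtain ⟨q, hqP, hqp⟩ := Finset.exists_mem_ne (show 1 < N.primeFactors.card by omega) p
        exact final p q hpP hqP (Ne.symm hqp) (hdvdq q)
          (notS_bad_left hpprime (Nat.prime_of_mem_primeFactors hqP) (by intro hc; omega))
      · rw [hg] at h3p; omega
      · obtain ⟨q, hqP, hqp⟩ := Finset.exists_mem_ne (show 1 < N.primeFactors.card by omega) p
        exact final p q hpP hqP (Ne.symm hqp) (hdvdq q)
          (notS_bad_left hpprime (Nat.prime_of_mem_primeFactors hqP) (by intro hc; omega))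
      · rw [hg] at h3p; omega
      · obtain ⟨q, hqP, hqp⟩ := Finset.exists_mem_ne (show 1 < N.primeFactors.card by omega) p
        exact final p q hpP hqP (Ne.symm hqp) (hdvdq q)
          (notS_bad_left hpprime (Nat.prime_of_mem_primeFactors hqP) (by intro hc; omega))
end
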